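/- arXiv:2205.09076 — 3 statements merged into one kernel-verified Lean document; each statement's English description precedes it below -/
import Mathlib

section
/- In any Stick representation of the cycle C_{2k} (k ≥ 2) with vertices a_1, b_1, …, a_k, b_k in cyclic order (a_i vertical, b_i horizontal), the left-to-right order of the origins of b_1, …, b_k along the ground line is a circular rotation of the sequence (b_1, b_2, …, b_k) or a circular rotation of the reversed sequence (b_k, b_{k-1}, …, b_1); that is, there exists i such that the order is b_i, b_{i+1}, …, b_{i-1} (indices mod k) or b_i, b_{i-1}, …, b_{i+1} (indices mod k). -/
/-- Vertical stick segment with origin `(p, -p)` and length `α`. -/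
def vSeg (p α : ℝ) : Set (ℝ × ℝ) := {z | z.1 = p ∧ -p ≤ z.2 ∧ z.2 ≤ -p + α}

/-- Horizontal stick segment with origin `(q, -q)` and length `β`. -/
def hSeg (q β : ℝ) : Set (ℝ × ℝ) := {z | z.2 = -q ∧ q ≤ z.1 ∧ z.1 ≤ q + β}

open Fin.NatCast Fin.CommRing in
lemma finCastInj {k : ℕ} [NeZero k] {u v : ℕ} (hu : u < k) (hv : v < k)
    (h : (u : Fin k) = (v : Fin k)) : u = v := by
  have h2 := congrArg Fin.val h
  rwa [Fin.val_cast_of_lt hu, Fin.val_cast_of_lt hv] at h2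

open Fin.NatCast Fin.CommRing in
lemma keyLemma {k : ℕ} [NeZero k] (hk : 2 ≤ k) (p q L R : Fin k → ℝ)
    (hpinj : Function.Injective p) (hqinj : Function.Injective q)
    (hE : ∀ i j : Fin k, (L i ≤ q j ∧ q j < p i ∧ p i ≤ R j) ↔ (j = i ∨ i = j + 1))
    (M : Fin k) (hM : ∀ i, i ≠ M → p i < p M) (hq0 : q (M - 1) < q M) :
    ∀ l, l ≠ M - 1 → q (l + 1) < q l := by
  have hqp : ∀ i, q i < p i := fun i => ((hE i i).mpr (Or.inl rfl)).2.1
  have hLq : ∀ i, L i ≤ q i := fun i => ((hE i i).mpr (Or.inl rfl)).1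
  have hpR : ∀ i, p i ≤ R i := fun i => ((hE i i).mpr (Or.inl rfl)).2.2
  have hqp' : ∀ i, q i < p (i + 1) := fun i => ((hE (i+1) i).mpr (Or.inr rfl)).2.1
  have hLq' : ∀ i, L (i + 1) ≤ q i := fun i => ((hE (i+1) i).mpr (Or.inr rfl)).1
  have hpR' : ∀ i, p (i + 1) ≤ R i := fun i => ((hE (i+1) i).mpr (Or.inr rfl)).2.2
  have hMle : ∀ i, p i ≤ p M := by
    intro i; by_cases h : i = M
    · exact h ▸ le_rfl
    · exact (hM i h).le
  have hkpos : 0 < k := by omega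
  have hcastk : ((k - 1 : ℕ) : Fin k) = - 1 := by
    have h1 : ((k : ℕ) : Fin k) = 0 := by
      apply Fin.ext
      rw [Fin.val_natCast]
      simp [Nat.mod_self]
    have hkk : k - 1 + 1 = k := by omega
    have h2 : ((k - 1 : ℕ) : Fin k) = ((k : ℕ) : Fin k) - 1 := by
      calc ((k - 1 : ℕ) : Fin k) = ((k - 1 : ℕ) : Fin k) + 1 - 1 := by ring
        _ = ((k - 1 + 1 : ℕ) : Fin k) - 1 := by push_cast; ring
        _ = ((k : ℕ) : Fin k) - 1 := by rw [hkk]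
    rw [h2, h1]; ring
  have hMk1 : M + ((k - 1 : ℕ) : Fin k) = M - 1 := by rw [hcastk]; ring
  have hidx : ∀ {a b : ℕ}, a < k → b < k → a ≠ b → M + (a : Fin k) ≠ M + (b : Fin k) := by
    intro a b ha hb hab h
    exact hab (finCastInj ha hb (add_left_cancel h))
  have hpMR : p M ≤ R (M - 1) := by
    have h' := hpR' (M - 1)
    have e : (M - 1) + 1 = M := by ring
    rwa [e] at h'
  -- main induction on the length of the established descending arc
  have main : ∀ t : ℕ, 1 ≤ t → t ≤ k - 1 →
      ∀ u : ℕ, t ≤ u → u ≤ k - 1 →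
        q (M + (u : Fin k)) < q (M + ((t - 1 : ℕ) : Fin k)) ∧
        p (M + (u : Fin k)) < p (M + ((t - 1 : ℕ) : Fin k)) := by
    intro t ht1
    induction t, ht1 using Nat.le_induction with
    | base =>
      intro _ u hu1 hu2
      have hne : M + (u : Fin k) ≠ M := by
        intro h
        have h' : M + (u : Fin k) = M + ((0 : ℕ) : Fin k) := by simpa using h
        have := finCastInj (by omega) (by omega) (add_left_cancel h')
        omega
      simp only [Nat.sub_self, Nat.cast_zero, add_zero]
      constructor
      · -- q part
        rcases (hqinj.ne hne).lt_or_gt with h | h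
        · exact h
        · exfalso
          have closure : ∀ l : Fin k, l ≠ M → q M < q l →
              ((l + 1) ≠ M ∧ q M < q (l + 1)) := by
            intro l hlM hql
            have hlM1 : l ≠ M - 1 := by
              intro h'
              rw [h'] at hql
              exact absurd hql (not_lt.mpr hq0.le)
            have hl1M : l + 1 ≠ M := by
              intro h'
              exact hlM1 (by rw [← h']; ring)
            have hadj : ¬((M = l + 1) ∨ (l + 1 = M + 1)) := by
              rintro (h' | h')
              · exact hl1M h'.symm
              · exact hlM (add_right_cancel h')
            have hqMp : q M < p (l + 1) := hql.trans (hqp' l)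
            by_cases hc : L (l + 1) ≤ q M
            · exfalso
              have hRM : R M < p (l + 1) := by
                by_contra h'
                exact hadj ((hE (l + 1) M).mp ⟨hc, hqMp, not_lt.mp h'⟩)
              exact absurd ((hpR M).trans_lt hRM) (not_lt.mpr (hMle (l + 1)))
            · exact ⟨hl1M, (not_le.mp hc).trans_le (hLq (l + 1))⟩
          have iter : ∀ n : ℕ, (M + (u : Fin k) + (n : Fin k)) ≠ M ∧
              q M < q (M + (u : Fin k) + (n : Fin k)) := by
            intro n
            induction n with
            | zero =>
              rw [Nat.cast_zero, add_zero]
              exact ⟨hne, h⟩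
            | succ n ih =>
              have e : (M + (u : Fin k) + ((n + 1 : ℕ) : Fin k))
                  = (M + (u : Fin k) + (n : Fin k)) + 1 := by push_cast; ring
              rw [e]
              exact closure _ ih.1 ih.2
          have hfin := iter (M - (M + (u : Fin k))).val
          rw [Fin.cast_val_eq_self] at hfin
          have e2 : M + (u : Fin k) + (M - (M + (u : Fin k))) = M := by ring
          rw [e2] at hfin
          exact hfin.1 rfl
      · exact hM _ hne
    | succ t ht1 ih =>
      intro htk1 u hu1 hu2
      have htk : t ≤ k - 1 := by omega
      have Pt := ih htk
      simp only [Nat.add_sub_cancel]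
      have hjm1 : M + ((t - 1 : ℕ) : Fin k) + 1 = M + (t : Fin k) := by
        have h' : ((t - 1 : ℕ) : Fin k) + 1 = ((t - 1 + 1 : ℕ) : Fin k) := by push_cast; ring
        have h'' : t - 1 + 1 = t := by omega
        rw [add_assoc, h', h'']
      have hqj : q (M + (t : Fin k)) < q (M + ((t - 1 : ℕ) : Fin k)) := (Pt t le_rfl htk).1
      have hqjm_pj : q (M + ((t - 1 : ℕ) : Fin k)) < p (M + (t : Fin k)) := by
        have h' := hqp' (M + ((t - 1 : ℕ) : Fin k))
        rwa [hjm1] at h'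
      -- forward closure
      have CL : ∀ v : ℕ, t + 1 ≤ v → v + 1 ≤ k - 1 →
          q (M + (t : Fin k)) < q (M + (v : Fin k)) →
          q (M + (t : Fin k)) < q (M + ((v + 1 : ℕ) : Fin k)) := by
        intro v hv1 hv2 hql
        have ecast : M + ((v + 1 : ℕ) : Fin k) = (M + (v : Fin k)) + 1 := by push_cast; ring
        have hqlp : q (M + (t : Fin k)) < p (M + (v : Fin k) + 1) := hql.trans (hqp' _)
        by_cases hc : L (M + (v : Fin k) + 1) ≤ q (M + (t : Fin k))
        · exfalso
          have hadj1 : ¬((M + (t : Fin k) = M + (v : Fin k) + 1) ∨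
              (M + (v : Fin k) + 1 = M + (t : Fin k) + 1)) := by
            rintro (h' | h')
            · rw [← ecast] at h'
              exact hidx (by omega) (by omega) (by omega) h'
            · exact hidx (by omega) (by omega) (by omega) (add_right_cancel h')
          have hRj : R (M + (t : Fin k)) < p (M + (v : Fin k) + 1) := by
            by_contra h'
            exact hadj1 ((hE (M + (v : Fin k) + 1) (M + (t : Fin k))).mp ⟨hc, hqlp, not_lt.mp h'⟩)
          have hadj2 : ¬((M + ((t - 1 : ℕ) : Fin k) = M + (v : Fin k) + 1) ∨
              (M + (v : Fin k) + 1 = M + ((t - 1 : ℕ) : Fin k) + 1)) := by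
            rintro (h' | h')
            · rw [← ecast] at h'
              exact hidx (by omega) (by omega) (by omega) h'
            · rw [hjm1, ← ecast] at h'
              exact hidx (by omega) (by omega) (by omega) h'
          apply hadj2
          apply (hE (M + (v : Fin k) + 1) (M + ((t - 1 : ℕ) : Fin k))).mp
          refine ⟨(hLq' _).trans (Pt v (by omega) (by omega)).1.le, ?_, ?_⟩
          · exact lt_of_le_of_lt (le_trans hqjm_pj.le (hpR _)) hRj
          · have h5 := (Pt (v + 1) (by omega) (by omega)).2
            rw [ecast] at h5
            exact h5.le.trans (hpR _)
        · rw [ecast]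
          exact (not_le.mp hc).trans_le (hLq _)
      -- nothing outside the arc exceeds q j
      have Sempty : ∀ v : ℕ, t + 1 ≤ v → v ≤ k - 1 →
          ¬ (q (M + (t : Fin k)) < q (M + (v : Fin k))) := by
        intro v hv1 hv2 hql
        have iter : ∀ w : ℕ, v ≤ w → w ≤ k - 1 →
            q (M + (t : Fin k)) < q (M + (w : Fin k)) := by
          intro w
          induction w with
          | zero => intro h1 _; exact absurd h1 (by omega)
          | succ w ihw =>
            intro h1 h2
            rcases Nat.lt_or_ge w.succ v with h3 | h3
            · exact absurd h1 (by omega)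
            · rcases Nat.eq_or_lt_of_le h3 with h4 | h4
              · rw [h4] at hql; exact hql
              · exact CL w (by omega) (by omega) (ihw (by omega) (by omega))
        have hfin := iter (k - 1) (by omega) le_rfl
        rw [hMk1] at hfin
        have hadj3 : ¬((M - 1 = M + (t : Fin k)) ∨ (M + (t : Fin k) = (M - 1) + 1)) := by
          rintro (h' | h')
          · rw [← hMk1] at h'
            exact hidx (a := k - 1) (b := t) (by omega) (by omega) (by omega) h'
          · have e : (M - 1) + 1 = M := by ring
            rw [e] at h'
            have h'' : M + (t : Fin k) = M + ((0 : ℕ) : Fin k) := by simpa using h'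
            exact hidx (by omega) (by omega) (by omega) h''
        apply hadj3
        apply (hE (M + (t : Fin k)) (M - 1)).mp
        refine ⟨(hLq _).trans hfin.le, ?_, (hMle _).trans hpMR⟩
        have h7 : q (M - 1) < q (M + ((t - 1 : ℕ) : Fin k)) := by
          have h8 := (Pt (k - 1) (by omega) le_rfl).1
          rwa [hMk1] at h8
        exact h7.trans hqjm_pj
      have qpart : ∀ v : ℕ, t + 1 ≤ v → v ≤ k - 1 →
          q (M + (v : Fin k)) < q (M + (t : Fin k)) := by
        intro v hv1 hv2
        rcases (hqinj.ne (hidx (a := v) (b := t) (by omega) (by omega) (by omega))).lt_or_gt with h | h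
        · exact h
        · exact absurd h (Sempty v hv1 hv2)
      refine ⟨qpart u hu1 hu2, ?_⟩
      -- p part
      by_contra hc
      have hne : M + (u : Fin k) ≠ M + (t : Fin k) := hidx (by omega) (by omega) (by omega)
      have hgt : p (M + (t : Fin k)) < p (M + (u : Fin k)) :=
        (not_lt.mp hc).lt_of_ne (hpinj.ne hne).symm
      rcases Nat.eq_or_lt_of_le hu1 with hu | hu
      · -- u = t + 1
        have ecast2 : M + (u : Fin k) = M + (t : Fin k) + 1 := by
          have h' : ((u : ℕ) : Fin k) = (t : Fin k) + 1 := by rw [← hu]; push_cast; ring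
          rw [h', ← add_assoc]
        have hadj4 : ¬((M + ((t - 1 : ℕ) : Fin k) = M + (u : Fin k)) ∨
            (M + (u : Fin k) = M + ((t - 1 : ℕ) : Fin k) + 1)) := by
          rintro (h' | h')
          · exact hidx (by omega) (by omega) (by omega) h'
          · rw [hjm1] at h'
            exact hidx (by omega) (by omega) (by omega) h'
        apply hadj4
        apply (hE (M + (u : Fin k)) (M + ((t - 1 : ℕ) : Fin k))).mp
        refine ⟨?_, hqjm_pj.trans hgt, (Pt u (by omega) hu2).2.le.trans (hpR _)⟩
        have h9 := hLq' (M + (t : Fin k))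
        rw [← ecast2] at h9
        exact h9.trans hqj.le
      · -- u ≥ t + 2
        have hadj5 : ¬((M + (t : Fin k) = M + (u : Fin k)) ∨
            (M + (u : Fin k) = M + (t : Fin k) + 1)) := by
          rintro (h' | h')
          · exact hidx (by omega) (by omega) (by omega) h'
          · have e : M + (t : Fin k) + 1 = M + ((t + 1 : ℕ) : Fin k) := by push_cast; ring
            rw [e] at h'
            exact hidx (by omega) (by omega) (by omega) h'
        have hLl : L (M + (u : Fin k)) ≤ q (M + (t : Fin k)) :=
          (hLq _).trans (qpart u hu1 hu2).le
        have hqjp : q (M + (t : Fin k)) < p (M + (u : Fin k)) := (hqp _).trans hgt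
        have hRj : R (M + (t : Fin k)) < p (M + (u : Fin k)) := by
          by_contra h'
          exact hadj5 ((hE (M + (u : Fin k)) (M + (t : Fin k))).mp ⟨hLl, hqjp, not_lt.mp h'⟩)
        have hadj6 : ¬((M + ((t - 1 : ℕ) : Fin k) = M + (u : Fin k)) ∨
            (M + (u : Fin k) = M + ((t - 1 : ℕ) : Fin k) + 1)) := by
          rintro (h' | h')
          · exact hidx (by omega) (by omega) (by omega) h'
          · rw [hjm1] at h'
            exact hidx (by omega) (by omega) (by omega) h'
        apply hadj6
        apply (hE (M + (u : Fin k)) (M + ((t - 1 : ℕ) : Fin k))).mp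
        refine ⟨(hLq _).trans ((qpart u hu1 hu2).trans hqj).le, ?_,
          (Pt u (by omega) hu2).2.le.trans (hpR _)⟩
        exact (hqjm_pj.trans_le (hpR _)).trans hRj
  -- conclude
  intro l hl
  obtain ⟨v, hvlt, hlv⟩ : ∃ v : ℕ, v < k ∧ l = M + (v : Fin k) :=
    ⟨(l - M).val, (l - M).isLt, by rw [Fin.cast_val_eq_self]; ring⟩
  have hvne : v ≠ k - 1 := by
    intro h'
    apply hl
    rw [hlv, h', hMk1]
  have h10 := (main (v + 1) (by omega) (by omega) (v + 1) le_rfl (by omega)).1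
  rw [Nat.add_sub_cancel] at h10
  have e1 : M + (((v + 1 : ℕ)) : Fin k) = l + 1 := by
    rw [hlv]; push_cast; ring
  rw [e1, ← hlv] at h10
  exact h10

/-- In a Stick representation of `C_{2k}`, the left-to-right order of the
`B`-origins is a circular rotation of `(b_1, …, b_k)` or of its reverse. -/
theorem cycle_b_origins_circular_order
    {k : ℕ} [NeZero k] (hk : 2 ≤ k)
    (aO aL bO bL : Fin k → ℝ)
    (haL : ∀ i, 0 ≤ aL i) (hbL : ∀ i, 0 ≤ bL i)
    (hdistinct : ∀ i j : Fin k, aO i ≠ bO j)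
    (haO : Function.Injective aO) (hbO : Function.Injective bO)
    (hadj : ∀ i j : Fin k,
      ((vSeg (aO i) (aL i) ∩ hSeg (bO j) (bL j)).Nonempty ↔ (j = i ∨ i = j + 1))) :
    ∃ i : Fin k,
      (∀ s t : Fin k, s < t → bO (i + s) < bO (i + t)) ∨
      (∀ s t : Fin k, s < t → bO (i - s) < bO (i - t)) := by
  open Fin.NatCast Fin.CommRing in
  have hgeo : ∀ i j : Fin k, ((vSeg (aO i) (aL i) ∩ hSeg (bO j) (bL j)).Nonempty ↔
      (aO i - aL i ≤ bO j ∧ bO j ≤ aO i ∧ aO i ≤ bO j + bL j)) := by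
    intro i j
    constructor
    · rintro ⟨z, ⟨hz1, hz2, hz3⟩, hw1, hw2, hw3⟩
      rw [hz1] at hw2 hw3
      rw [hw1] at hz2 hz3
      exact ⟨by linarith, by linarith, by linarith⟩
    · rintro ⟨h1, h2, h3⟩
      exact ⟨(aO i, -bO j), ⟨rfl, by simp; linarith, by simp; linarith⟩, rfl, h2, h3⟩
  have hE : ∀ i j : Fin k,
      ((fun i => aO i - aL i) i ≤ bO j ∧ bO j < aO i ∧ aO i ≤ (fun j => bO j + bL j) j) ↔
      (j = i ∨ i = j + 1) := by
    intro i j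
    simp only
    constructor
    · rintro ⟨h1, h2, h3⟩
      exact (hadj i j).mp ((hgeo i j).mpr ⟨h1, h2.le, h3⟩)
    · intro h
      obtain ⟨h1, h2, h3⟩ := (hgeo i j).mp ((hadj i j).mpr h)
      exact ⟨h1, h2.lt_of_ne (hdistinct i j).symm, h3⟩
  obtain ⟨M, -, hMmax⟩ :=
    Finset.exists_max_image Finset.univ aO ⟨(0 : Fin k), Finset.mem_univ _⟩
  have hM : ∀ i, i ≠ M → aO i < aO M := fun i hi =>
    (hMmax i (Finset.mem_univ i)).lt_of_ne fun e => hi (haO e)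
  have hMne : (M : Fin k) - 1 ≠ M := by
    intro h
    have h1 : (1 : Fin k) = 0 := sub_eq_self.mp h
    have h2 : ((1 : ℕ) : Fin k) = ((0 : ℕ) : Fin k) := by
      rw [Nat.cast_one, Nat.cast_zero]; exact h1
    have := finCastInj (by omega) (by omega) h2
    omega
  have hne_q : bO (M - 1) ≠ bO M := fun e => hMne (hbO e)
  rcases hne_q.lt_or_gt with hlt | hgt
  · -- backward rotation, starting from M - 1
    refine ⟨M - 1, Or.inr ?_⟩
    have hkey := keyLemma hk aO bO (fun i => aO i - aL i) (fun j => bO j + bL j)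
      haO hbO hE M hM hlt
    have mono : ∀ v : ℕ, v ≤ k - 1 → ∀ w : ℕ, w < v →
        bO (M - 1 - (w : Fin k)) < bO (M - 1 - (v : Fin k)) := by
      intro v
      induction v with
      | zero => intro _ w hw; exact absurd hw (Nat.not_lt_zero w)
      | succ v ihv =>
        intro hv w hw
        have hstep : bO (M - 1 - (v : Fin k)) < bO (M - 1 - ((v + 1 : ℕ) : Fin k)) := by
          have hlne : M - 1 - ((v + 1 : ℕ) : Fin k) ≠ M - 1 := by
            intro h'
            have h'' : ((v + 1 : ℕ) : Fin k) = ((0 : ℕ) : Fin k) := by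
              simpa using sub_eq_self.mp h'
            have := finCastInj (by omega) (by omega) h''
            omega
          have h13 := hkey _ hlne
          have e : (M - 1 - ((v + 1 : ℕ) : Fin k)) + 1 = M - 1 - (v : Fin k) := by
            push_cast; ring
          rwa [e] at h13
        rcases Nat.lt_or_ge w v with h14 | h14
        · exact (ihv (by omega) w h14).trans hstep
        · have hwv : w = v := by omega
          rw [hwv]; exact hstep
    intro s t hst
    have h15 := mono t.val (by have := t.isLt; omega) s.val (Fin.lt_def.mp hst)
    rw [Fin.cast_val_eq_self, Fin.cast_val_eq_self] at h15
    exact h15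
  · -- forward rotation, starting from M
    refine ⟨M, Or.inl ?_⟩
    have hE' : ∀ i j : Fin k,
        ((fun i => aO (-i) - aL (-i)) i ≤ (fun j => bO (-1 - j)) j ∧
         (fun j => bO (-1 - j)) j < (fun i => aO (-i)) i ∧
         (fun i => aO (-i)) i ≤ (fun j => bO (-1 - j) + bL (-1 - j)) j) ↔
        (j = i ∨ i = j + 1) := by
      intro i j
      simp only
      have base := hE (-i) (-1 - j)
      simp only at base
      rw [base]
      have e1 : ((-1 : Fin k) - j = -i) ↔ (i = j + 1) := by
        constructor
        · intro h; rw [← neg_neg i, ← h]; ring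
        · intro h; rw [h]; ring
      have e2 : (-i = (-1 : Fin k) - j + 1) ↔ (i = j) := by
        constructor
        · intro h; rw [← neg_neg i, h]; ring
        · intro h; rw [h]; ring
      rw [e1, e2]
      constructor
      · rintro (h | h)
        · exact Or.inr h
        · exact Or.inl h.symm
      · rintro (h | h)
        · exact Or.inr h.symm
        · exact Or.inl h
    have hp'inj : Function.Injective (fun i : Fin k => aO (-i)) := by
      intro a b h
      simpa using neg_injective (haO h)
    have hq'inj : Function.Injective (fun j : Fin k => bO (-1 - j)) := by
      intro a b h
      exact sub_right_inj.mp (hbO h)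
    have hM' : ∀ i : Fin k, i ≠ -M → (fun i : Fin k => aO (-i)) i < (fun i : Fin k => aO (-i)) (-M) := by
      intro i hi
      simp only
      rw [neg_neg]
      refine hM (-i) fun e => hi ?_
      rw [← neg_neg i, e]
    have hq0' : (fun j : Fin k => bO (-1 - j)) (-M - 1) < (fun j : Fin k => bO (-1 - j)) (-M) := by
      simp only
      have e3 : (-1 : Fin k) - (-M - 1) = M := by ring
      have e4 : (-1 : Fin k) - (-M) = M - 1 := by ring
      rw [e3, e4]
      exact hgt
    have hkey' := keyLemma hk (fun i : Fin k => aO (-i)) (fun j : Fin k => bO (-1 - j))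
      (fun i : Fin k => aO (-i) - aL (-i)) (fun j : Fin k => bO (-1 - j) + bL (-1 - j))
      hp'inj hq'inj hE' (-M) hM' hq0'
    have hB : ∀ m : Fin k, m ≠ M → bO (m - 1) < bO m := by
      intro m hm
      have hl : (-1 : Fin k) - m ≠ -M - 1 := by
        intro h'
        apply hm
        linear_combination -h'
      have h16 := hkey' _ hl
      calc bO (m - 1) = bO (-1 - ((-1 : Fin k) - m + 1)) := by congr 1; ring
        _ < bO (-1 - ((-1 : Fin k) - m)) := h16
        _ = bO m := by congr 1; ring
    have mono : ∀ v : ℕ, v ≤ k - 1 → ∀ w : ℕ, w < v →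
        bO (M + (w : Fin k)) < bO (M + (v : Fin k)) := by
      intro v
      induction v with
      | zero => intro _ w hw; exact absurd hw (Nat.not_lt_zero w)
      | succ v ihv =>
        intro hv w hw
        have hstep : bO (M + (v : Fin k)) < bO (M + ((v + 1 : ℕ) : Fin k)) := by
          have hmne : M + ((v + 1 : ℕ) : Fin k) ≠ M := by
            intro h'
            have h'' : M + ((v + 1 : ℕ) : Fin k) = M + ((0 : ℕ) : Fin k) := by simpa using h'
            have := finCastInj (by omega) (by omega) (add_left_cancel h'')
            omega
          have h17 := hB _ hmne
          have e7 : M + ((v + 1 : ℕ) : Fin k) - 1 = M + (v : Fin k) := by push_cast; ring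
          rwa [e7] at h17
        rcases Nat.lt_or_ge w v with h18 | h18
        · exact (ihv (by omega) w h18).trans hstep
        · have hwv : w = v := by omega
          rw [hwv]; exact hstep
    intro s t hst
    have h19 := mono t.val (by have := t.isLt; omega) s.val (Fin.lt_def.mp hst)
    rw [Fin.cast_val_eq_self, Fin.cast_val_eq_self] at h19
    exact h19
end

section
/- Let x, t, y, z be four hooks with pairwise distinct centers on the ground line forming a hook representation of the 4-cycle with edges xt, ty, yz, zx (so x and y are non-adjacent, and t and z are non-adjacent). Then at most one of the centers of t and z lies strictly between the centers of x and y along the ground line. -/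
/-- Hook with center `(p,-p)`, vertical arm length `α`, horizontal arm length `β`. -/
def hook (p α β : ℝ) : Set (ℝ × ℝ) := vSeg p α ∪ hSeg p β

/-- `p` lies strictly between `p₁` and `p₂`. -/
def strictlyBetween (p p₁ p₂ : ℝ) : Prop := min p₁ p₂ < p ∧ p < max p₁ p₂

/-!
If two hooks with centers `p < q` meet, they can only do so at the corner `(q, -p)`, where the
horizontal arm of `p` crosses the vertical arm of `q`; so they meet iff `q ≤ p + βp` and
`q - p ≤ αq`. Suppose `t ≤ z` both lie strictly between `a` and `b` with `a < b`, where `t` meets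
`b` and `a` meets `z`. Then the horizontal arm of `t` reaches past `b`, hence past `z`, and the
vertical arm of `z` is longer than `z - a`, hence longer than `z - t`: so `t` meets `z`, which is
impossible for the non-adjacent vertices `t` and `z` of the 4-cycle.
-/

lemma hook_inter_nonempty_of_le {p q αp βp αq βq : ℝ} (hpq : p ≤ q) (hβ : q ≤ p + βp)
    (hα : q - p ≤ αq) : (hook p αp βp ∩ hook q αq βq).Nonempty :=
  ⟨(q, -p), Or.inr ⟨rfl, hpq, hβ⟩, Or.inl ⟨rfl, by linarith, by linarith⟩⟩

lemma le_add_and_sub_le_of_hook_inter_nonempty {p q αp βp αq βq : ℝ} (hpq : p < q)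
    (h : (hook p αp βp ∩ hook q αq βq).Nonempty) : q ≤ p + βp ∧ q - p ≤ αq := by
  obtain ⟨w, ⟨_, _, _⟩ | ⟨_, _, _⟩, ⟨_, _, _⟩ | ⟨_, _, _⟩⟩ := h <;> constructor <;> linarith

lemma hook_inter_nonempty_of_nested {a t z b αa βa αt βt αz βz αb βb : ℝ}
    (hat : a < t) (htz : t ≤ z) (hzb : z < b)
    (htb : (hook t αt βt ∩ hook b αb βb).Nonempty)
    (haz : (hook a αa βa ∩ hook z αz βz).Nonempty) :
    (hook t αt βt ∩ hook z αz βz).Nonempty := by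
  obtain ⟨hβt, -⟩ := le_add_and_sub_le_of_hook_inter_nonempty (htz.trans_lt hzb) htb
  obtain ⟨-, hαz⟩ := le_add_and_sub_le_of_hook_inter_nonempty (hat.trans_le htz) haz
  exact hook_inter_nonempty_of_le htz (by linarith) (by linarith)

lemma strictlyBetween_iff {p p₁ p₂ : ℝ} :
    strictlyBetween p p₁ p₂ ↔ p₁ < p ∧ p < p₂ ∨ p₂ < p ∧ p < p₁ := by
  rw [strictlyBetween, min_lt_iff, lt_max_iff]
  constructor
  · rintro ⟨h₁ | h₁, h₂ | h₂⟩
    · exact absurd h₁ h₂.not_gt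
    · exact Or.inl ⟨h₁, h₂⟩
    · exact Or.inr ⟨h₁, h₂⟩
    · exact absurd h₁ h₂.not_gt
  · rintro (⟨h₁, h₂⟩ | ⟨h₁, h₂⟩)
    · exact ⟨Or.inl h₁, Or.inr h₂⟩
    · exact ⟨Or.inr h₁, Or.inl h₂⟩

lemma hook_inter_nonempty_of_four_cycle {x t y z αx βx αt βt αy βy αz βz : ℝ}
    (htz : t ≤ z) (ht : strictlyBetween t x y) (hz : strictlyBetween z x y)
    (hxt : (hook x αx βx ∩ hook t αt βt).Nonempty)
    (hty : (hook t αt βt ∩ hook y αy βy).Nonempty)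
    (hyz : (hook y αy βy ∩ hook z αz βz).Nonempty)
    (hzx : (hook z αz βz ∩ hook x αx βx).Nonempty) :
    (hook t αt βt ∩ hook z αz βz).Nonempty := by
  rw [strictlyBetween_iff] at ht hz
  rcases ht with ⟨hxt', hty'⟩ | ⟨hyt', htx'⟩ <;> rcases hz with ⟨hxz', hzy'⟩ | ⟨hyz', hzx'⟩
  · exact hook_inter_nonempty_of_nested hxt' htz hzy' hty (Set.inter_comm _ _ ▸ hzx)
  · linarith
  · linarith
  · exact hook_inter_nonempty_of_nested hyt' htz hzx' (Set.inter_comm _ _ ▸ hxt) hyz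

theorem four_cycle_hooks_at_most_one_between_general
    (px pt py pz αx βx αt βt αy βy αz βz : ℝ)
    (hxt : (hook px αx βx ∩ hook pt αt βt).Nonempty)
    (hty : (hook pt αt βt ∩ hook py αy βy).Nonempty)
    (hyz : (hook py αy βy ∩ hook pz αz βz).Nonempty)
    (hzx : (hook pz αz βz ∩ hook px αx βx).Nonempty)
    (htz : hook pt αt βt ∩ hook pz αz βz = ∅) :
    ¬ (strictlyBetween pt px py ∧ strictlyBetween pz px py) := by
  rintro ⟨ht, hz⟩
  rcases le_total pt pz with hle | hle
  · exact (hook_inter_nonempty_of_four_cycle hle ht hz hxt hty hyz hzx).ne_empty htz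
  · rw [Set.inter_comm] at hxt hty hyz hzx htz
    exact (hook_inter_nonempty_of_four_cycle hle hz ht hzx hyz hty hxt).ne_empty htz

theorem four_cycle_hooks_at_most_one_between
    (px pt py pz αx βx αt βt αy βy αz βz : ℝ)
    (hαx : 0 ≤ αx) (hβx : 0 ≤ βx) (hαt : 0 ≤ αt) (hβt : 0 ≤ βt)
    (hαy : 0 ≤ αy) (hβy : 0 ≤ βy) (hαz : 0 ≤ αz) (hβz : 0 ≤ βz)
    (hdist : px ≠ pt ∧ px ≠ py ∧ px ≠ pz ∧ pt ≠ py ∧ pt ≠ pz ∧ py ≠ pz)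
    (hxt : (hook px αx βx ∩ hook pt αt βt).Nonempty)
    (hty : (hook pt αt βt ∩ hook py αy βy).Nonempty)
    (hyz : (hook py αy βy ∩ hook pz αz βz).Nonempty)
    (hzx : (hook pz αz βz ∩ hook px αx βx).Nonempty)
    (hxy : hook px αx βx ∩ hook py αy βy = ∅)
    (htz : hook pt αt βt ∩ hook pz αz βz = ∅) :
    ¬ (strictlyBetween pt px py ∧ strictlyBetween pz px py) :=
  four_cycle_hooks_at_most_one_between_general px pt py pz αx βx αt βt αy βy αz βz hxt hty hyz hzx
    htz
end

section
/- Let x, y be distinct Boolean variables and u, w fresh variables. For any truth assignment v on {x, y}: v makes exactly one literal true in the multiset clause (x ∨ x ∨ y) (counting the two occurrences of x with multiplicity) if and only if v extends to an assignment on {x, y, u, w} making each of the clauses (x ∨ y ∨ u), (x ∨ y ∨ w), (y ∨ u ∨ w) contain exactly one true literal. Moreover, such an extension exists only when v(x) = false and v(y) = true. -/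
/-!
The doubled literal `x` in `(x ∨ x ∨ y)` already contributes two true literals when `v(x)` is true,
so the clause has exactly one true literal iff `v(x) = false` and `v(y) = true`. The three replacement
clauses have exactly the same solutions on `{x, y}`: `u = w = false` extends that assignment, and if
`v(y) = false` the clause `(y ∨ u ∨ w)` makes exactly one of `u`, `w` true, while the other two clauses
force `u = w = ¬ v(x)`.
-/

/-- The clause on three distinct variables with values `a`, `b`, `c` contains
exactly one true literal. -/
def exactlyOne (a b c : Bool) : Prop :=
  (if a then 1 else 0) + (if b then 1 else 0) + (if c then 1 else 0) = (1 : ℕ)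

theorem doubled_literal_count_eq_one_iff (vx vy : Bool) :
    2 * (if vx then 1 else 0) + (if vy then 1 else 0) = (1 : ℕ) ↔ vx = false ∧ vy = true := by
  cases vx <;> cases vy <;> simp

theorem exists_exactlyOne_extension_iff (vx vy : Bool) :
    (∃ vu vw : Bool, exactlyOne vx vy vu ∧ exactlyOne vx vy vw ∧ exactlyOne vy vu vw) ↔
      vx = false ∧ vy = true := by
  constructor
  · rintro ⟨vu, vw, hxyu, hxyw, hyuw⟩
    revert hxyu hxyw hyuw
    cases vx <;> cases vy <;> cases vu <;> cases vw <;> simp [exactlyOne]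
  · rintro ⟨rfl, rfl⟩
    exact ⟨false, false, by simp [exactlyOne]⟩

theorem duplicate_literal_clause_replacement (vx vy : Bool) :
    ((2 * (if vx then 1 else 0) + (if vy then 1 else 0) = (1 : ℕ)) ↔
      ∃ vu vw : Bool,
        exactlyOne vx vy vu ∧ exactlyOne vx vy vw ∧ exactlyOne vy vu vw) ∧
    ((∃ vu vw : Bool,
        exactlyOne vx vy vu ∧ exactlyOne vx vy vw ∧ exactlyOne vy vu vw) →
      vx = false ∧ vy = true) := by
  rw [doubled_literal_count_eq_one_iff, exists_exactlyOne_extension_iff]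
  exact ⟨Iff.rfl, id⟩
end
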